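/- arXiv:2507.08662 — 4 statements merged into one kernel-verified Lean document; each statement's English description precedes it below -/
import Mathlib

section
/- Let π ∈ F_q[T] be monic of degree 1. For nonnegative integers d, e, the number Λ_π(d, e) of pairs (f, ν) of monic polynomials in F_q[T] with deg f = d, deg ν = e and gcd(f, πν) = 1 equals: q^e if d = 0; q^{d+e}(1 − q^{−1})(1 − q^{−2d})/(1 + q^{−1}) if e ≥ d > 0; and q^{d+e}(1 − q^{−1})(1 + q^{−2e−1})/(1 + q^{−1}) if d > e. -/
/-!
If `f` is prime to `π`, then `g = gcd(f, π ν) = gcd(f, ν)` is a monic common factor prime to `π`,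
and `(f / g, ν / g)` is a pair counted by `Λ_π`. Writing `B(k)` for the number of monic
polynomials of degree `k` prime to `π`, this gives the convolution identity
`B(d) q^e = ∑_{k ≤ min(d, e)} B(k) Λ_π(d - k, e - k)`, valid for every `π`.
For linear `π` we have `B(0) = 1` and `B(k + 1) = q^(k + 1) - q^k = q B(k) - [k = 0]`, so comparing
the identity at `(d + 1, e + 1)` with `q` times the one at `(d, e)` gives
`Λ_π(d + 1, e + 1) = Λ_π(d, e) + (B(d + 1) - B(d)) q^(e + 1)`. The closed forms follow by induction
from `Λ_π(0, e) = q^e` and `Λ_π(d, 0) = B(d)`.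
-/

open Polynomial

noncomputable section

namespace MDS

/-- `Λ_π(d, e)`: the number of pairs `(f, ν)` of monic polynomials with `deg f = d`,
`deg ν = e` and `gcd(f, π ν) = 1`. -/
def Lam (F : Type) [Field F] (π : Polynomial F) (d e : ℕ) : ℕ :=
  Nat.card {fv : Polynomial F × Polynomial F //
    fv.1.Monic ∧ fv.1.natDegree = d ∧ fv.2.Monic ∧ fv.2.natDegree = e ∧
      IsCoprime fv.1 (π * fv.2)}

section Monics

variable {F : Type*} [Field F]

abbrev Monics (F : Type*) [Field F] (n : ℕ) : Type _ := {f : F[X] // f.Monic ∧ f.natDegree = n}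

def Monics.mul {a b n : ℕ} (f : Monics F a) (g : Monics F b) (h : a + b = n) : Monics F n :=
  ⟨f.1 * g.1, f.2.1.mul g.2.1, by rw [f.2.1.natDegree_mul g.2.1, f.2.2, g.2.2, h]⟩

def monicsEquivDegreeLT (n : ℕ) : Monics F n ≃ degreeLT F n where
  toFun f := ⟨f.1 - X ^ n, by
    have hdeg : f.1.degree = (X ^ n : F[X]).degree := by
      rw [degree_X_pow, degree_eq_natDegree f.2.1.ne_zero, f.2.2]
    rw [mem_degreeLT, ← degree_X_pow (R := F), ← hdeg]
    exact degree_sub_lt_left hdeg f.2.1.ne_zero (by simp [f.2.1.leadingCoeff])⟩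
  invFun g := ⟨X ^ n + g.1, monic_X_pow_add (mem_degreeLT.mp g.2),
    natDegree_eq_of_degree_eq_some <| by
      rw [degree_add_eq_left_of_degree_lt (by simpa using mem_degreeLT.mp g.2), degree_X_pow]⟩
  left_inv f := by ext1; simp
  right_inv g := by ext1; simp

instance [Finite F] (n : ℕ) : Finite (Monics F n) :=
  have := Fintype.ofFinite F
  .of_equiv _ ((monicsEquivDegreeLT n).trans (degreeLTEquiv F n).toEquiv).symm

theorem card_monics [Fintype F] (n : ℕ) : Nat.card (Monics F n) = Fintype.card F ^ n := by
  rw [Nat.card_congr ((monicsEquivDegreeLT n).trans (degreeLTEquiv F n).toEquiv)]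
  simp

theorem card_monics_dvd [Fintype F] {π : F[X]} (hπ : π.Monic) (n : ℕ) :
    Nat.card {f : Monics F (π.natDegree + n) // π ∣ f.1} = Fintype.card F ^ n := by
  rw [← card_monics n]
  refine (Nat.card_congr (Equiv.ofBijective
    (fun g => ⟨Monics.mul ⟨π, hπ, rfl⟩ g rfl, dvd_mul_right _ _⟩) ⟨fun g₁ g₂ h => ?_, ?_⟩)).symm
  · exact Subtype.ext (mul_left_cancel₀ hπ.ne_zero (congrArg (·.1.1) h))
  · rintro ⟨⟨f, hf, hfd⟩, c, hfc : f = π * c⟩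
    have hc : c.Monic := hπ.of_mul_monic_left (hfc ▸ hf)
    rw [hfc, hπ.natDegree_mul hc, Nat.add_left_cancel_iff] at hfd
    exact ⟨⟨c, hc, hfd⟩, Subtype.ext (Subtype.ext hfc.symm)⟩

abbrev CoprimeMonics (π : F[X]) (n : ℕ) : Type _ := {f : Monics F n // IsCoprime f.1 π}

theorem card_coprimeMonics_zero (π : F[X]) : Nat.card (CoprimeMonics π 0) = 1 := by
  rw [Nat.card_eq_one_iff_exists]
  refine ⟨⟨⟨1, monic_one, natDegree_one⟩, isCoprime_one_left⟩, fun ⟨⟨f, hf, hfd⟩, _⟩ => ?_⟩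
  simp only [Subtype.mk.injEq]
  exact hf.natDegree_eq_zero.mp hfd

theorem card_coprimeMonics_add_pow [Fintype F] {π : F[X]} (hπ : π.Monic) (hirr : Irreducible π)
    (n : ℕ) :
    Nat.card (CoprimeMonics π (π.natDegree + n)) + Fintype.card F ^ n
      = Fintype.card F ^ (π.natDegree + n) := by
  have hdvd : {f : Monics F (π.natDegree + n) // ¬ IsCoprime f.1 π}
      ≃ {f : Monics F (π.natDegree + n) // π ∣ f.1} :=
    Equiv.subtypeEquivRight fun f => by rw [isCoprime_comm, hirr.coprime_iff_not_dvd, not_not]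
  classical
  rw [← card_monics_dvd hπ n, ← Nat.card_congr hdvd, ← card_monics, ← Nat.card_sum]
  exact Nat.card_congr (Equiv.sumCompl _)

abbrev CoprimePairs (π : F[X]) (d e : ℕ) : Type _ :=
  {p : Monics F d × Monics F e // IsCoprime p.1.1 (π * p.2.1)}

theorem gcd_mul_mul_of_isCoprime [DecidableEq F] {π g f ν : F[X]} (hg : g.Monic)
    (h : IsCoprime f (π * ν)) : gcd (g * f) (π * (g * ν)) = g := by
  have h1 : gcd f (π * ν) = 1 := by
    rw [← normalize_gcd, normalize_eq_one, gcd_isUnit_iff]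
    exact h
  rw [mul_left_comm, gcd_mul_left, h1, mul_one, hg.normalize_eq_self]

theorem exists_eq_mul_mul_of_isCoprime {π f ν : F[X]} (hf : f.Monic) (hfπ : IsCoprime f π) :
    ∃ g f₁ ν₁ : F[X], g.Monic ∧ IsCoprime g π ∧ IsCoprime f₁ (π * ν₁) ∧ f = g * f₁ ∧
      ν = g * ν₁ := by
  classical
  set g := gcd f (π * ν) with hg_def
  have hg0 : g ≠ 0 := fun h => hf.ne_zero ((gcd_eq_zero_iff _ _).mp h).1
  have hg : g.Monic := by rw [hg_def, ← normalize_gcd]; exact monic_normalize hg0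
  have hgπ : IsCoprime g π := hfπ.of_isCoprime_of_dvd_left (gcd_dvd_left _ _)
  obtain ⟨f₁, hf₁⟩ := gcd_dvd_left f (π * ν)
  obtain ⟨ν₁, hν₁⟩ := hgπ.dvd_of_dvd_mul_left (gcd_dvd_right f (π * ν))
  refine ⟨g, f₁, ν₁, hg, hgπ, ?_, hf₁, hν₁⟩
  -- `g = gcd (g f₁) (π g ν₁) = g * gcd f₁ (π ν₁)`
  have h1 : g * gcd f₁ (π * ν₁) = g * 1 := by
    rw [mul_one, ← hg.normalize_eq_self, ← gcd_mul_left, hg.normalize_eq_self, mul_left_comm,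
      ← hf₁, ← hν₁]
  rw [← gcd_isUnit_iff, mul_left_cancel₀ hg0 h1]
  exact isUnit_one

def mulCommonFactor (π : F[X]) (d e : ℕ) :
    (Σ k : Fin (min d e + 1), CoprimeMonics π k × CoprimePairs π (d - k) (e - k)) →
      CoprimeMonics π d × Monics F e
  | ⟨k, g, p⟩ =>
    (⟨g.1.mul p.1.1 (by have := k.isLt; omega), g.2.mul_left p.2.of_mul_right_left⟩,
      g.1.mul p.1.2 (by have := k.isLt; omega))

theorem mulCommonFactor_bijective (π : F[X]) (d e : ℕ) : (mulCommonFactor π d e).Bijective := by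
  classical
  constructor
  · rintro ⟨k, ⟨⟨g, hg, hgk⟩, _⟩, ⟨⟨f₁, _⟩, ⟨ν₁, _⟩⟩, hco⟩
      ⟨k', ⟨⟨g', hg', hgk'⟩, _⟩, ⟨⟨f₁', _⟩, ⟨ν₁', _⟩⟩, hco'⟩ h
    simp only [mulCommonFactor, Monics.mul, Prod.mk.injEq, Subtype.mk.injEq] at h
    obtain rfl : g = g' := by
      rw [← gcd_mul_mul_of_isCoprime hg hco, ← gcd_mul_mul_of_isCoprime hg' hco', h.1, h.2]
    obtain rfl : k = k' := Fin.ext (hgk.symm.trans hgk')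
    obtain rfl := mul_left_cancel₀ hg.ne_zero h.1
    obtain rfl := mul_left_cancel₀ hg.ne_zero h.2
    rfl
  · rintro ⟨⟨⟨f, hf, hfd⟩, hfπ⟩, ⟨ν, hν, hνe⟩⟩
    obtain ⟨g, f₁, ν₁, hg, hgπ, hco, rfl, rfl⟩ := exists_eq_mul_mul_of_isCoprime (ν := ν) hf hfπ
    have hf₁ := hg.of_mul_monic_left hf
    have hν₁ := hg.of_mul_monic_left hν
    rw [hg.natDegree_mul hf₁] at hfd
    rw [hg.natDegree_mul hν₁] at hνe
    exact ⟨⟨⟨g.natDegree, by omega⟩, ⟨⟨g, hg, rfl⟩, hgπ⟩,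
      ⟨⟨⟨f₁, hf₁, (by omega : f₁.natDegree = d - g.natDegree)⟩,
        ⟨ν₁, hν₁, (by omega : ν₁.natDegree = e - g.natDegree)⟩⟩, hco⟩⟩, rfl⟩

end Monics

section Counting

variable {F : Type} [Field F]

theorem lam_eq_card_coprimePairs (π : F[X]) (d e : ℕ) :
    Lam F π d e = Nat.card (CoprimePairs π d e) :=
  Nat.card_congr
    { toFun := fun x => ⟨(⟨x.1.1, x.2.1, x.2.2.1⟩, ⟨x.1.2, x.2.2.2.1, x.2.2.2.2.1⟩), x.2.2.2.2.2⟩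
      invFun := fun x => ⟨(x.1.1.1, x.1.2.1), x.1.1.2.1, x.1.1.2.2, x.1.2.2.1, x.1.2.2.2, x.2⟩
      left_inv := fun _ => rfl
      right_inv := fun _ => rfl }

variable [Fintype F]

theorem card_coprimeMonics_mul_pow (π : F[X]) (d e : ℕ) :
    Nat.card (CoprimeMonics π d) * Fintype.card F ^ e
      = ∑ k ∈ Finset.range (min d e + 1),
          Nat.card (CoprimeMonics π k) * Lam F π (d - k) (e - k) := by
  rw [← card_monics e, ← Nat.card_prod,
    ← Nat.card_congr (Equiv.ofBijective _ (mulCommonFactor_bijective π d e)), Nat.card_sigma,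
    ← Fin.sum_univ_eq_sum_range]
  simp only [Nat.card_prod, lam_eq_card_coprimePairs]

theorem lam_zero_left (π : F[X]) (e : ℕ) : Lam F π 0 e = Fintype.card F ^ e := by
  simpa [card_coprimeMonics_zero] using (card_coprimeMonics_mul_pow π 0 e).symm

theorem lam_zero_right (π : F[X]) (d : ℕ) : Lam F π d 0 = Nat.card (CoprimeMonics π d) := by
  simpa [card_coprimeMonics_zero] using (card_coprimeMonics_mul_pow π d 0).symm

variable {π : F[X]}

theorem card_coprimeMonics_succ (hπ : π.Monic) (hπd : π.natDegree = 1) (n : ℕ) :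
    (Nat.card (CoprimeMonics π (n + 1)) : ℚ)
      = (Fintype.card F : ℚ) ^ (n + 1) - (Fintype.card F : ℚ) ^ n := by
  have h := card_coprimeMonics_add_pow hπ (irreducible_of_degree_eq_one
    (degree_eq_iff_natDegree_eq_of_pos one_pos |>.mpr hπd)) n
  rw [hπd, add_comm 1 n] at h
  rw [eq_sub_iff_add_eq]
  exact_mod_cast h

theorem lam_succ_succ (hπ : π.Monic) (hπd : π.natDegree = 1) (d e : ℕ) :
    (Lam F π (d + 1) (e + 1) : ℚ) = Lam F π d e
      + (Nat.card (CoprimeMonics π (d + 1)) - Nat.card (CoprimeMonics π d))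
        * (Fintype.card F : ℚ) ^ (e + 1) := by
  have hB : ∀ k, (Nat.card (CoprimeMonics π (k + 1)) : ℚ)
      = Fintype.card F * Nat.card (CoprimeMonics π k) - if k = 0 then 1 else 0 := by
    rintro (_ | k)
    · simp [card_coprimeMonics_succ hπ hπd, card_coprimeMonics_zero]
    · rw [card_coprimeMonics_succ hπ hπd, card_coprimeMonics_succ hπ hπd]
      simp only [Nat.add_one_ne_zero, if_false]
      ring
  have h1 := congrArg (Nat.cast (R := ℚ)) (card_coprimeMonics_mul_pow π (d + 1) (e + 1))
  have h0 := congrArg (Nat.cast (R := ℚ)) (card_coprimeMonics_mul_pow π d e)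
  push_cast at h1 h0
  have hshift : ∑ k ∈ Finset.range (min d e + 1),
        (Nat.card (CoprimeMonics π (k + 1)) : ℚ) * Lam F π (d - k) (e - k)
      = Fintype.card F * (Nat.card (CoprimeMonics π d) * (Fintype.card F : ℚ) ^ e)
        - Lam F π d e := by
    simp [hB, h0, sub_mul, ite_mul, Finset.sum_sub_distrib, Finset.mul_sum, mul_assoc]
  rw [show min (d + 1) (e + 1) = min d e + 1 by omega, Finset.sum_range_succ'] at h1
  simp only [Nat.add_sub_add_right, hshift, card_coprimeMonics_zero, Nat.cast_one, one_mul,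
    Nat.sub_zero] at h1
  linear_combination -h1

theorem lam_of_pos_of_le (hπ : π.Monic) (hπd : π.natDegree = 1) {d e : ℕ} (hd : 0 < d)
    (hde : d ≤ e) :
    (Lam F π d e : ℚ)
      = (Fintype.card F : ℚ) ^ (d + e) * (1 - (Fintype.card F : ℚ)⁻¹)
          * (1 - ((Fintype.card F : ℚ) ^ (2 * d))⁻¹) / (1 + (Fintype.card F : ℚ)⁻¹) := by
  obtain ⟨n, rfl⟩ : ∃ n, d = n + 1 := ⟨d - 1, by omega⟩
  obtain ⟨m, rfl⟩ : ∃ m, e = n + 1 + m := ⟨e - (n + 1), by omega⟩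
  clear hd hde
  induction n with
  | zero =>
    rw [show 0 + 1 + m = m + 1 by ring, lam_succ_succ hπ hπd, lam_zero_left,
      Nat.cast_pow, card_coprimeMonics_succ hπ hπd, card_coprimeMonics_zero]
    field_simp
    ring
  | succ n ih =>
    rw [show n + 1 + 1 + m = n + 1 + m + 1 by ring, lam_succ_succ hπ hπd, ih,
      card_coprimeMonics_succ hπ hπd, card_coprimeMonics_succ hπ hπd]
    field_simp
    ring

theorem lam_of_lt (hπ : π.Monic) (hπd : π.natDegree = 1) {d e : ℕ} (hed : e < d) :
    (Lam F π d e : ℚ)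
      = (Fintype.card F : ℚ) ^ (d + e) * (1 - (Fintype.card F : ℚ)⁻¹)
          * (1 + ((Fintype.card F : ℚ) ^ (2 * e + 1))⁻¹) / (1 + (Fintype.card F : ℚ)⁻¹) := by
  obtain ⟨m, rfl⟩ : ∃ m, d = e + m + 1 := ⟨d - e - 1, by omega⟩
  clear hed
  induction e with
  | zero =>
    rw [lam_zero_right, show 0 + m + 1 = m + 1 by ring, card_coprimeMonics_succ hπ hπd]
    field_simp
    ring
  | succ e ih =>
    rw [show e + 1 + m + 1 = e + m + 1 + 1 by ring, lam_succ_succ hπ hπd, ih,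
      card_coprimeMonics_succ hπ hπd, card_coprimeMonics_succ hπ hπd]
    field_simp
    ring

end Counting

/-- explicit evaluation of `Λ_π(d, e)` for `π` monic of degree 1. -/
theorem statement_2
    (F : Type) [Field F] [Fintype F]
    (π : Polynomial F) (hπ : π.Monic) (hπd : π.natDegree = 1) (d e : ℕ) :
    (d = 0 → (Lam F π d e : ℚ) = (Fintype.card F : ℚ) ^ e) ∧
    (d ≤ e → 0 < d → (Lam F π d e : ℚ)
      = (Fintype.card F : ℚ) ^ (d + e) * (1 - (Fintype.card F : ℚ)⁻¹)
          * (1 - ((Fintype.card F : ℚ) ^ (2 * d))⁻¹) / (1 + (Fintype.card F : ℚ)⁻¹)) ∧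
    (e < d → (Lam F π d e : ℚ)
      = (Fintype.card F : ℚ) ^ (d + e) * (1 - (Fintype.card F : ℚ)⁻¹)
          * (1 + ((Fintype.card F : ℚ) ^ (2 * e + 1))⁻¹) / (1 + (Fintype.card F : ℚ)⁻¹)) :=
  ⟨fun hd => by rw [hd, lam_zero_left, Nat.cast_pow], fun hde hd => lam_of_pos_of_le hπ hπd hd hde,
    fun hed => lam_of_lt hπ hπd hed⟩

end MDS
end
end

section
/- Assume q ≡ 1 (mod 4). Let M_{ii} be an integer, g = g_{ξχ^{M_{ii}}}, and n_i the multiplicative order of the character ξχ^{M_{ii}}. For an integer K, let Γ(x, K) be the n_i × n_i matrix over the field ℂ(x) of rational functions, with rows and columns indexed by ℤ/n_i, whose entries are: Γ_{k,ℓ}(x,K) = (qx/g)^{1−n_i} if k ≡ ℓ ≡ 1 + K − k (mod n_i); otherwise Γ_{k,k}(x,K) = (qx/g)^{1−((K+1−2k) % n_i)} · (1 − q)/(1 − q(qx/g)^{n_i}); Γ_{k,ℓ}(x,K) = (ξχ^{M_{ii}})^{ℓ(1+K)}(−1) · g_{(ξχ^{M_{ii}})^{2k−K−1}} · (qx/g)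 · (1 − (qx/g)^{−n_i})/(1 − q(qx/g)^{n_i}) whenever ℓ ≡ 1 + K − k (mod n_i) and ℓ ≢ k (mod n_i); and Γ_{k,ℓ}(x,K) = 0 in all other cases (here m % n_i denotes the least nonnegative residue of m modulo n_i). Then Γ(x, K) · Γ(g²/(q²x), K) is the n_i × n_i identity matrix, where Γ(g²/(q²x), K) is obtained from Γ(x, K) by substituting g²/(q²x) for x. -/
/-!
With `y = qx/g`, the substitution `x ↦ g²/(q²x)` is `y ↦ y⁻¹`, and `Γ` is supported on the
diagonal and on the graph of the involution `k ↦ 1 + K - k` of `ℤ/nᵢ`. So the product splits into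
`1 × 1` blocks `y^(1-nᵢ) · y^(nᵢ-1)` at the fixed points and `2 × 2` blocks on the orbits
`{k, 1 + K - k}`. Each `2 × 2` block is the identity by a rational identity in `u = y^nᵢ`, which
needs exactly two arithmetic inputs: the exponents `(K + 1 - 2k) % nᵢ` of the two diagonal entries
add up to `nᵢ`, and the two off-diagonal constants multiply to `q`, by `g_ψ g_ψ⁻¹ = ψ(-1) q` and
a parity count for the signs `ψ(-1)^…`. The denominators `1 - q u^{±1}` are nonzero because
`u` is a nonconstant rational function.
-/

open Polynomial
open scoped Classical

noncomputable section

namespace MDS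

/-- The power residue symbol `(f/g)_ψ = ψ(Res(f, g/b))`, where `b` is the leading coefficient of
`g`: the resultant of `f` against the monic polynomial `g/b` equals the norm of the residue class
of `f` in `F[T]/(g)`. -/
def resSym (F : Type) [Field F] (ψ : MulChar F ℂ) (f g : Polynomial F) : ℂ :=
  ψ (Algebra.norm F (Ideal.Quotient.mk (Ideal.span {g}) f))

/-- The coefficient of `T⁻¹` in the expansion of `u/v` as a Laurent series in `T⁻¹`. -/
def cInv (F : Type) [Field F] (u v : Polynomial F) : F :=
  ((u % v).coeff (v.natDegree - 1)) / v.leadingCoeff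

/-- The additive character `e(a) = exp(2 π i Tr_{F/F_p}(a) / p)`. -/
def eChar (F : Type) [Field F] (p : ℕ) [CharP F p] (a : F) : ℂ :=
  letI : Algebra (ZMod p) F := (ZMod.castHom dvd_rfl F).toAlgebra
  Complex.exp (2 * Real.pi * Complex.I * ((Algebra.trace (ZMod p) F a).val : ℂ) / (p : ℂ))

/-- `e(u/v)`: the additive character applied to the coefficient of `T⁻¹` of `u/v`. -/
def eRat (F : Type) [Field F] (p : ℕ) [CharP F p] (u v : Polynomial F) : ℂ :=
  eChar F p (cInv F u v)

/-- The finite field Gauss sum `g_ψ = ∑_{a ∈ F} ψ(a) e(a)`. -/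
def gaussC (F : Type) [Field F] [Fintype F] (p : ℕ) [CharP F p] (ψ : MulChar F ℂ) : ℂ :=
  ∑ a : F, ψ a * eChar F p a

/-- The polynomial of degree `< d` with coefficients `c 0, …, c (d-1)`. -/
def polyLt (F : Type) [Field F] (d : ℕ) (c : Fin d → F) : Polynomial F :=
  ∑ k : Fin d, Polynomial.C (c k) * Polynomial.X ^ (k : ℕ)

/-- The monic polynomial `X^d + ∑ c k X^k` of degree `d`. -/
def monicP (F : Type) [Field F] (d : ℕ) (c : Fin d → F) : Polynomial F :=
  Polynomial.X ^ d + polyLt F d c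

/-- The function field Gauss sum `g_ψ(f₁, f₂) = ∑_{h mod f₂} (h/f₂)_ψ e(h f₁ / f₂)`, where the
residues `h` modulo `f₂` are parametrised by the polynomials of degree `< deg f₂`. -/
def gaussFF (F : Type) [Field F] [Fintype F] (p : ℕ) [CharP F p]
    (ψ : MulChar F ℂ) (f₁ f₂ : Polynomial F) : ℂ :=
  ∑ c : Fin f₂.natDegree → F,
    resSym F ψ (polyLt F f₂.natDegree c) f₂ * eRat F p (polyLt F f₂.natDegree c * f₁) f₂

/-- The `n_i × n_i` scattering matrix `Γ(t, K)` over `ℂ(x)`, indexed by `ℤ/n_i`, with the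
variable `x` replaced by an arbitrary rational function `t` (so that substitution of `x` is
evaluation of the same formulas at `t`). -/
def Gam (F : Type) [Field F] [Fintype F] (p : ℕ) [CharP F p]
    (ψ : MulChar F ℂ) (ni : ℕ) (K : ℤ) (t : RatFunc ℂ) :
    Matrix (ZMod ni) (ZMod ni) (RatFunc ℂ) :=
  Matrix.of fun k ℓ =>
    let q : ℂ := (Fintype.card F : ℂ)
    let g : ℂ := gaussC F p ψ
    let y : RatFunc ℂ := RatFunc.C q * t / RatFunc.C g
    if ℓ = k ∧ k = 1 + (K : ZMod ni) - k then
      y ^ (1 - (ni : ℤ))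
    else if ℓ = k then
      y ^ (1 - (K + 1 - 2 * (ZMod.val k : ℤ)) % (ni : ℤ)) *
        (RatFunc.C (1 - q) / (1 - RatFunc.C q * y ^ (ni : ℕ)))
    else if ℓ = 1 + (K : ZMod ni) - k then
      RatFunc.C (((ψ (-1)) ^ ((ZMod.val ℓ : ℤ) * (1 + K))) *
          gaussC F p (ψ ^ (2 * (ZMod.val k : ℤ) - K - 1))) *
        y * ((1 - y ^ (-(ni : ℤ))) / (1 - RatFunc.C q * y ^ (ni : ℕ)))
    else 0

end MDS

namespace RatFunc

variable {K : Type*} [Field K]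

lemma intDegree_C_mul_X_div_C_pow {a b : K} (ha : a ≠ 0) (hb : b ≠ 0) (n : ℕ) :
    ((C a * X / C b) ^ n).intDegree = (n : ℤ) := by
  rw [mul_div_right_comm, ← map_div₀, mul_pow, ← map_pow,
    intDegree_mul (by simpa using pow_ne_zero n (div_ne_zero ha hb)) (pow_ne_zero n X_ne_zero),
    intDegree_C, zero_add, ← algebraMap_X, ← map_pow, intDegree_polynomial,
    Polynomial.natDegree_X_pow]

lemma one_sub_C_mul_ne_zero {f : RatFunc K} (hf : f.intDegree ≠ 0) (b : K) :
    1 - C b * f ≠ 0 := by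
  intro h
  have h1 : C b * f = 1 := by linear_combination -h
  have := intDegree_mul (left_ne_zero_of_mul_eq_one h1) (right_ne_zero_of_mul_eq_one h1)
  rw [h1, intDegree_one, intDegree_C, zero_add] at this
  exact hf this.symm

end RatFunc

theorem Int.emod_add_emod_eq_of_dvd_add {n a b : ℤ} (hn : 0 < n) (hab : n ∣ a + b)
    (ha : ¬ n ∣ a) : a % n + b % n = n := by
  obtain ⟨m, hm⟩ := hab
  rw [show b = -a + n * m by linarith, Int.add_mul_emod_self_left, Int.neg_emod, if_neg ha]
  omega

lemma one_sub_sq_div_add_mul_div_eq_one {L : Type*} [Field L] {Q u : L} (hu : u ≠ 0)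
    (h : 1 - Q * u ≠ 0) (h' : 1 - Q * u⁻¹ ≠ 0) :
    (1 - Q) / (1 - Q * u) * ((1 - Q) / (1 - Q * u⁻¹)) +
      Q * ((1 - u⁻¹) / (1 - Q * u) * ((1 - u) / (1 - Q * u⁻¹))) = 1 := by
  rw [div_mul_div_comm, div_mul_div_comm, mul_div_assoc', ← add_div,
    div_eq_one_iff_eq (mul_ne_zero h h')]
  linear_combination (Q - Q ^ 2) * mul_inv_cancel₀ hu

lemma mul_inv_zpow_one_sub_of_add_eq {L : Type*} [Field L] {y : L} (hy : y ≠ 0) {n : ℕ}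
    {r r' : ℤ} (h : r + r' = n) :
    y * (y ^ (1 - r'))⁻¹ = y ^ n * (y ^ (1 - r) * y⁻¹) := by
  rw [← zpow_neg, ← zpow_natCast, ← zpow_neg_one, ← zpow_one_add₀ hy, ← zpow_add₀ hy,
    ← zpow_add₀ hy]
  congr 1
  omega

section ScatteringMatrix

variable {ι L : Type*} [DecidableEq ι] [Field L]
  (σ : ι → ι) (n : ℕ) (Q : L) (r : ι → ℤ) (c : ι → L)

def scatteringMatrix (y : L) : Matrix ι ι L :=
  Matrix.of fun k ℓ =>
    if ℓ = k ∧ k = σ k then y ^ (1 - (n : ℤ))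
    else if ℓ = k then y ^ (1 - r k) * ((1 - Q) / (1 - Q * y ^ n))
    else if ℓ = σ k then c k * y * ((1 - y ^ (-(n : ℤ))) / (1 - Q * y ^ n))
    else 0

variable {σ} (y : L) {k ℓ : ι}

lemma scatteringMatrix_apply_self_of_fixed (h : σ k = k) :
    scatteringMatrix σ n Q r c y k k = y ^ (1 - (n : ℤ)) := by
  simp [scatteringMatrix, h]

lemma scatteringMatrix_apply_self (h : σ k ≠ k) :
    scatteringMatrix σ n Q r c y k k = y ^ (1 - r k) * ((1 - Q) / (1 - Q * y ^ n)) := by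
  simp [scatteringMatrix, Ne.symm h]

lemma scatteringMatrix_apply_swap (h : σ k ≠ k) :
    scatteringMatrix σ n Q r c y k (σ k) =
      c k * y * ((1 - y ^ (-(n : ℤ))) / (1 - Q * y ^ n)) := by
  simp [scatteringMatrix, h]

lemma scatteringMatrix_apply_of_ne (h₁ : ℓ ≠ k) (h₂ : ℓ ≠ σ k) :
    scatteringMatrix σ n Q r c y k ℓ = 0 := by
  simp [scatteringMatrix, h₁, h₂]

variable [Fintype ι]

lemma scatteringMatrix_mul_apply (B : Matrix ι ι L) (k ℓ : ι) :
    (scatteringMatrix σ n Q r c y * B) k ℓ =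
      ∑ j ∈ {k, σ k}, scatteringMatrix σ n Q r c y k j * B j ℓ := by
  rw [Matrix.mul_apply]
  refine (Finset.sum_subset (Finset.subset_univ _) fun j _ hj => ?_).symm
  simp only [Finset.mem_insert, Finset.mem_singleton, not_or] at hj
  exact mul_eq_zero_of_left (scatteringMatrix_apply_of_ne n Q r c y hj.1 hj.2) _

variable {n Q r c y}

lemma scatteringMatrix_mul_inv_apply_self (hσ : Function.Involutive σ) (hy : y ≠ 0)
    (hD : 1 - Q * y ^ n ≠ 0) (hD' : 1 - Q * (y ^ n)⁻¹ ≠ 0) (hk : σ k ≠ k)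
    (hc : c k * c (σ k) = Q) :
    (scatteringMatrix σ n Q r c y * scatteringMatrix σ n Q r c y⁻¹) k k = 1 := by
  have hswap := scatteringMatrix_apply_swap n Q r c y⁻¹ (σ := σ) (k := σ k)
    (by rwa [hσ k, ne_comm])
  rw [hσ k] at hswap
  rw [scatteringMatrix_mul_apply, Finset.sum_pair (Ne.symm hk),
    scatteringMatrix_apply_self _ _ _ _ _ hk, scatteringMatrix_apply_self _ _ _ _ _ hk,
    scatteringMatrix_apply_swap _ _ _ _ _ hk, hswap]
  simp only [inv_zpow, zpow_neg, zpow_natCast, inv_pow, inv_inv]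
  set u := y ^ n
  set X := (1 - Q) / (1 - Q * u) * ((1 - Q) / (1 - Q * u⁻¹))
  set P := (1 - u⁻¹) / (1 - Q * u) * ((1 - u) / (1 - Q * u⁻¹))
  linear_combination one_sub_sq_div_add_mul_div_eq_one (pow_ne_zero n hy) hD hD' + P * hc +
    X * mul_inv_cancel₀ (zpow_ne_zero (1 - r k) hy) + c k * c (σ k) * P * mul_inv_cancel₀ hy

lemma scatteringMatrix_mul_inv_apply_swap (hσ : Function.Involutive σ) (hy : y ≠ 0)
    (hk : σ k ≠ k) (hr : r k + r (σ k) = n) :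
    (scatteringMatrix σ n Q r c y * scatteringMatrix σ n Q r c y⁻¹) k (σ k) = 0 := by
  have hk' : σ (σ k) ≠ σ k := by rwa [hσ k, ne_comm]
  rw [scatteringMatrix_mul_apply, Finset.sum_pair (Ne.symm hk),
    scatteringMatrix_apply_self _ _ _ _ _ hk, scatteringMatrix_apply_self _ _ _ _ _ hk',
    scatteringMatrix_apply_swap _ _ _ _ _ hk, scatteringMatrix_apply_swap _ _ _ _ _ hk]
  simp only [inv_zpow, zpow_neg, zpow_natCast, inv_pow, inv_inv]
  have hb := mul_inv_zpow_one_sub_of_add_eq hy hr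
  set u := y ^ n
  set e := c k * (1 - Q) * (1 - Q * u)⁻¹ * (1 - Q * u⁻¹)⁻¹
  linear_combination
    e * (1 - u⁻¹) * hb - e * (y ^ (1 - r k) * y⁻¹) * mul_inv_cancel₀ (pow_ne_zero n hy)

theorem scatteringMatrix_mul_inv (hσ : Function.Involutive σ) (hy : y ≠ 0)
    (hD : 1 - Q * y ^ n ≠ 0) (hD' : 1 - Q * (y ^ n)⁻¹ ≠ 0)
    (hr : ∀ k, σ k ≠ k → r k + r (σ k) = n)
    (hc : ∀ k, σ k ≠ k → c k * c (σ k) = Q) :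
    scatteringMatrix σ n Q r c y * scatteringMatrix σ n Q r c y⁻¹ = 1 := by
  ext k ℓ
  by_cases hk : σ k = k
  · rw [scatteringMatrix_mul_apply, hk, Finset.insert_eq_of_mem (Finset.mem_singleton_self k),
      Finset.sum_singleton]
    by_cases hℓ : ℓ = k
    · subst hℓ
      rw [scatteringMatrix_apply_self_of_fixed _ _ _ _ _ hk,
        scatteringMatrix_apply_self_of_fixed _ _ _ _ _ hk, Matrix.one_apply_eq, inv_zpow]
      exact mul_inv_cancel₀ (zpow_ne_zero _ hy)
    · rw [scatteringMatrix_apply_of_ne _ _ _ _ _ hℓ (by rwa [hk]), mul_zero,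
        Matrix.one_apply_ne (Ne.symm hℓ)]
  by_cases hℓk : ℓ = k
  · rw [hℓk, Matrix.one_apply_eq]
    exact scatteringMatrix_mul_inv_apply_self hσ hy hD hD' hk (hc k hk)
  by_cases hℓσ : ℓ = σ k
  · rw [hℓσ, Matrix.one_apply_ne (Ne.symm hk)]
    exact scatteringMatrix_mul_inv_apply_swap hσ hy hk (hr k hk)
  rw [scatteringMatrix_mul_apply, Finset.sum_pair (Ne.symm hk),
    scatteringMatrix_apply_of_ne _ _ _ _ y⁻¹ hℓk hℓσ,
    scatteringMatrix_apply_of_ne _ _ _ _ y⁻¹ hℓσ (by rwa [hσ k]), mul_zero, mul_zero,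
    add_zero, Matrix.one_apply_ne (Ne.symm hℓk)]

end ScatteringMatrix

lemma zpow_two_mul_add_mul_eq_one {G : Type*} [GroupWithZero G] {ε : G} {n : ℕ}
    (h₂ : ε ^ 2 = 1) (hn : ε ^ n = 1) (a b : ℤ) : ε ^ (2 * a + n * b) = 1 := by
  have hε : ε ≠ 0 := by rintro rfl; simp at h₂
  rw [zpow_add₀ hε, zpow_mul, zpow_mul, zpow_ofNat, zpow_natCast, h₂, hn, one_zpow, one_zpow,
    one_mul]

lemma MulChar.zpow_apply_neg_one {R R' : Type*} [Field R] [Field R'] (χ : MulChar R R') (z : ℤ) :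
    (χ ^ z) (-1) = χ (-1) ^ z := by
  rw [← Units.coe_neg_one, MulChar.zpow_apply_coe, ← MulChar.coe_toUnitHom, map_zpow,
    Units.val_zpow_eq_zpow_val, MulChar.coe_toUnitHom]

namespace MDS

section GaussSum

variable {F : Type} [Field F] {p : ℕ} [CharP F p]

def traceAddChar (hp : p.Prime) : AddChar F ℂ :=
  letI : Algebra (ZMod p) F := (ZMod.castHom dvd_rfl F).toAlgebra
  haveI : NeZero p := ⟨hp.ne_zero⟩
  (AddChar.zmodChar p (Complex.isPrimitiveRoot_exp p hp.ne_zero).pow_eq_one).compAddMonoidHom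
    (Algebra.trace (ZMod p) F).toAddMonoidHom

lemma eChar_eq_traceAddChar (hp : p.Prime) (a : F) : eChar F p a = traceAddChar hp a := by
  have : NeZero p := ⟨hp.ne_zero⟩
  rw [eChar, traceAddChar, AddChar.compAddMonoidHom_apply, AddChar.zmodChar_apply,
    LinearMap.toAddMonoidHom_coe, ← Complex.exp_nat_mul]
  ring_nf

variable [Fintype F]

lemma traceAddChar_ne_one (hp : p.Prime) : traceAddChar (F := F) hp ≠ 1 := by
  let : Algebra (ZMod p) F := (ZMod.castHom dvd_rfl F).toAlgebra
  have : Fact p.Prime := ⟨hp⟩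
  have : NeZero p := ⟨hp.ne_zero⟩
  intro h
  obtain ⟨a, ha⟩ := Algebra.trace_surjective (ZMod p) F 1
  have h1 : traceAddChar hp a = 1 := by rw [h]; rfl
  rw [traceAddChar, AddChar.compAddMonoidHom_apply, AddChar.zmodChar_apply,
    LinearMap.toAddMonoidHom_coe, ha, ZMod.val_one, pow_one] at h1
  exact (Complex.isPrimitiveRoot_exp p hp.ne_zero).ne_one hp.one_lt h1

lemma traceAddChar_isPrimitive (hp : p.Prime) : (traceAddChar (F := F) hp).IsPrimitive :=
  AddChar.IsPrimitive.of_ne_one (traceAddChar_ne_one hp)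

lemma gaussC_eq_gaussSum (hp : p.Prime) (ψ : MulChar F ℂ) :
    gaussC F p ψ = gaussSum ψ (traceAddChar hp) := by
  simp only [gaussC, gaussSum, eChar_eq_traceAddChar hp]

lemma gaussC_ne_zero (hp : p.Prime) (ψ : MulChar F ℂ) : gaussC F p ψ ≠ 0 := by
  rw [gaussC_eq_gaussSum hp]
  by_cases hψ : ψ = 1
  · rw [hψ, gaussSum_one_left (traceAddChar_ne_one hp)]
    exact neg_ne_zero.2 one_ne_zero
  · exact gaussSum_ne_zero_of_nontrivial (by exact_mod_cast Fintype.card_ne_zero) hψ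
      (traceAddChar_isPrimitive hp)

lemma gaussC_mul_gaussC_inv (hp : p.Prime) {ψ : MulChar F ℂ} (hψ : ψ ≠ 1) :
    gaussC F p ψ * gaussC F p ψ⁻¹ = ψ (-1) * Fintype.card F := by
  rw [gaussC_eq_gaussSum hp, gaussC_eq_gaussSum hp, ← mul_gaussSum_inv_eq_gaussSum ψ⁻¹,
    MulChar.inv_apply', inv_neg_one, mul_left_comm,
    gaussSum_mul_gaussSum_eq_card hψ (traceAddChar_isPrimitive hp)]

lemma gaussC_zpow_mul_gaussC_zpow (hp : p.Prime) {ψ : MulChar F ℂ} {a b : ℤ}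
    (hab : (orderOf ψ : ℤ) ∣ a + b) (ha : ¬ (orderOf ψ : ℤ) ∣ a) :
    gaussC F p (ψ ^ a) * gaussC F p (ψ ^ b) = ψ (-1) ^ a * Fintype.card F := by
  have hb : ψ ^ b = (ψ ^ a)⁻¹ := by
    obtain ⟨m, hm⟩ := hab
    rw [← zpow_neg, show b = -a + orderOf ψ * m by linarith, zpow_add, zpow_mul, zpow_natCast,
      pow_orderOf_eq_one, one_zpow, mul_one]
  rw [hb, gaussC_mul_gaussC_inv hp (by rwa [Ne, ← orderOf_dvd_iff_zpow_eq_one]),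
    MulChar.zpow_apply_neg_one]

end GaussSum

section Gam

variable (F : Type) [Field F] [Fintype F] (p : ℕ) [CharP F p] (ψ : MulChar F ℂ) {ni : ℕ}
  (K : ℤ)

def gamCoeff (k : ZMod ni) : ℂ :=
  ψ (-1) ^ ((ZMod.val (1 + (K : ZMod ni) - k) : ℤ) * (1 + K)) *
    gaussC F p (ψ ^ (2 * (ZMod.val k : ℤ) - K - 1))

lemma Gam_eq_scatteringMatrix (t : RatFunc ℂ) :
    Gam F p ψ ni K t =
      scatteringMatrix (fun k => 1 + (K : ZMod ni) - k) ni (RatFunc.C (Fintype.card F : ℂ))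
        (fun k => (K + 1 - 2 * (ZMod.val k : ℤ)) % ni)
        (fun k => RatFunc.C (gamCoeff F p ψ K k))
        (RatFunc.C (Fintype.card F : ℂ) * t / RatFunc.C (gaussC F p ψ)) := by
  ext k ℓ
  simp only [Gam, scatteringMatrix, Matrix.of_apply, gamCoeff]
  split_ifs <;> simp_all

variable {F p ψ K} [NeZero ni] {k : ZMod ni}

lemma dvd_val_add_val_reflect_sub (k : ZMod ni) :
    (ni : ℤ) ∣ ZMod.val k + ZMod.val (1 + (K : ZMod ni) - k) - (1 + K) := by
  rw [← ZMod.intCast_zmod_eq_zero_iff_dvd]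
  push_cast
  simp only [ZMod.natCast_val, ZMod.cast_id', id]
  ring

lemma not_dvd_two_mul_val_sub (hk : 1 + (K : ZMod ni) - k ≠ k) :
    ¬ (ni : ℤ) ∣ 2 * ZMod.val k - K - 1 := by
  rw [← ZMod.intCast_zmod_eq_zero_iff_dvd]
  push_cast
  simp only [ZMod.natCast_val, ZMod.cast_id', id]
  contrapose! hk
  linear_combination -hk

lemma emod_add_emod_reflect_eq (hk : 1 + (K : ZMod ni) - k ≠ k) :
    (K + 1 - 2 * (ZMod.val k : ℤ)) % ni +
      (K + 1 - 2 * (ZMod.val (1 + (K : ZMod ni) - k) : ℤ)) % ni = ni := by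
  obtain ⟨m, hm⟩ := dvd_val_add_val_reflect_sub (K := K) k
  refine Int.emod_add_emod_eq_of_dvd_add (by have := NeZero.ne ni; omega) ⟨-2 * m, ?_⟩ ?_
  · linear_combination -2 * hm
  · rw [← dvd_neg, neg_sub, ← sub_sub]
    exact not_dvd_two_mul_val_sub hk

lemma gamCoeff_mul_gamCoeff_reflect (hp : p.Prime) (hψ : orderOf ψ = ni)
    (hk : 1 + (K : ZMod ni) - k ≠ k) :
    gamCoeff F p ψ K k * gamCoeff F p ψ K (1 + (K : ZMod ni) - k) = Fintype.card F := by
  obtain ⟨m, hm⟩ := dvd_val_add_val_reflect_sub (K := K) k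
  have hgauss := gaussC_zpow_mul_gaussC_zpow hp (ψ := ψ)
    (a := 2 * ZMod.val k - K - 1) (b := 2 * ZMod.val (1 + (K : ZMod ni) - k) - K - 1)
    ⟨2 * m, by rw [hψ]; linear_combination 2 * hm⟩ (hψ ▸ not_dvd_two_mul_val_sub hk)
  have hsq : ψ (-1) ^ 2 = 1 := by rw [← map_pow, neg_one_sq, map_one]
  have hε0 : ψ (-1) ≠ 0 := by rintro h; simp [h] at hsq
  have hpow : ψ (-1) ^ ni = 1 := by
    rw [← MulChar.pow_apply' ψ (NeZero.ne ni), ← hψ, pow_orderOf_eq_one,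
      MulChar.one_apply isUnit_one.neg]
  have hsign : ψ (-1) ^ ((ZMod.val (1 + (K : ZMod ni) - k) : ℤ) * (1 + K) +
      ZMod.val k * (1 + K) + (2 * ZMod.val k - K - 1)) = 1 := by
    obtain ⟨c, hc⟩ := Int.even_mul_succ_self K
    rw [show (ZMod.val (1 + (K : ZMod ni) - k) : ℤ) * (1 + K) + ZMod.val k * (1 + K) +
        (2 * ZMod.val k - K - 1) = 2 * (c + ZMod.val k) + ni * (m * (1 + K)) by
      linear_combination (1 + K) * hm + hc]
    exact zpow_two_mul_add_mul_eq_one hsq hpow _ _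
  simp only [gamCoeff, sub_sub_cancel]
  rw [mul_mul_mul_comm, hgauss, ← mul_assoc, ← zpow_add₀ hε0, ← zpow_add₀ hε0, hsign,
    one_mul]

end Gam

theorem statement_8_general
    (F : Type) [Field F] [Fintype F] (p : ℕ) (hp : p.Prime) [CharP F p]
    (χ : MulChar F ℂ) (ξ : MulChar F ℂ)
    (Mii : ℤ) (ni : ℕ) [NeZero ni] (hni : ni = orderOf (ξ * χ ^ Mii)) (K : ℤ) :
    Gam F p (ξ * χ ^ Mii) ni K RatFunc.X *
      Gam F p (ξ * χ ^ Mii) ni K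
        (RatFunc.C ((gaussC F p (ξ * χ ^ Mii)) ^ 2) /
          (RatFunc.C ((Fintype.card F : ℂ) ^ 2) * RatFunc.X)) = 1 := by
  set ψ := ξ * χ ^ Mii
  set q : ℂ := (Fintype.card F : ℂ)
  set g := gaussC F p ψ
  have hq : q ≠ 0 := Nat.cast_ne_zero.2 Fintype.card_ne_zero
  have hg : g ≠ 0 := gaussC_ne_zero hp ψ
  have hCq : RatFunc.C q ≠ 0 := by simpa using hq
  have hCg : RatFunc.C g ≠ 0 := by simpa using hg
  have hyinv : RatFunc.C q * (RatFunc.C (g ^ 2) / (RatFunc.C (q ^ 2) * RatFunc.X)) /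
      RatFunc.C g = (RatFunc.C q * RatFunc.X / RatFunc.C g)⁻¹ := by
    rw [map_pow, map_pow]
    field_simp [RatFunc.X_ne_zero]
  have hdeg := RatFunc.intDegree_C_mul_X_div_C_pow hq hg ni
  have hni0 : (ni : ℤ) ≠ 0 := by exact_mod_cast NeZero.ne ni
  rw [Gam_eq_scatteringMatrix, Gam_eq_scatteringMatrix, hyinv]
  refine scatteringMatrix_mul_inv (fun k => sub_sub_cancel _ _)
    (div_ne_zero (mul_ne_zero hCq RatFunc.X_ne_zero) hCg)
    (RatFunc.one_sub_C_mul_ne_zero (by rwa [hdeg]) q)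
    (RatFunc.one_sub_C_mul_ne_zero (by rwa [RatFunc.intDegree_inv, hdeg, neg_ne_zero]) q)
    (fun k hk => emod_add_emod_reflect_eq hk)
    (fun k hk => by rw [← map_mul, gamCoeff_mul_gamCoeff_reflect hp hni.symm hk])

/-- `Γ(x, K) ⋅ Γ(g²/(q²x), K)` is the identity matrix, where `g = g_{ξχ^{M_{ii}}}`
and `n_i` is the multiplicative order of `ξχ^{M_{ii}}`. -/
theorem statement_8
    (F : Type) [Field F] [Fintype F] (p : ℕ) (hp : p.Prime) [CharP F p]
    (hq : Odd (Fintype.card F)) (hq4 : Fintype.card F % 4 = 1)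
    (χ : MulChar F ℂ) (n : ℕ) (hn : orderOf χ = n) (hneven : Even n) (hnpos : 0 < n)
    (ξ : MulChar F ℂ) (hξ : orderOf ξ = 2)
    (Mii : ℤ) (ni : ℕ) [NeZero ni] (hni : ni = orderOf (ξ * χ ^ Mii)) (K : ℤ) :
    Gam F p (ξ * χ ^ Mii) ni K RatFunc.X *
      Gam F p (ξ * χ ^ Mii) ni K
        (RatFunc.C ((gaussC F p (ξ * χ ^ Mii)) ^ 2) /
          (RatFunc.C ((Fintype.card F : ℂ) ^ 2) * RatFunc.X)) = 1 :=
  statement_8_general F p hp χ ξ Mii ni hni K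

end MDS
end
end

section
/- Let ψ, E, ζ be as in the context with ζ of even order n, fix i with E admissible at i, and assume ψ(e_i, a)ψ(a, e_i) is a power of ψ(e_i, e_i) for every a ∈ ℤ^r. Then M^{ψ, s_{i,E}(E), ζ} = M^{ψ, E, ζ}. -/
noncomputable section

namespace MDS

variable {r : ℕ}

/-- `m_{ij}`: the least `m ∈ ℕ` such that `ψ(e_i,e_i)^{m+1} = 1` or
`ψ(e_i,e_i)^m ψ(e_i,e_j) ψ(e_j,e_i) = 1`. -/
def mij (ψ : (Fin r → ℤ) → (Fin r → ℤ) → ℂ) (E : Fin r → Fin r → ℤ) (i j : Fin r) : ℕ :=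
  sInf {m : ℕ |
    ψ (E i) (E i) ^ (m + 1) = 1 ∨ ψ (E i) (E i) ^ m * (ψ (E i) (E j) * ψ (E j) (E i)) = 1}

/-- The reflected ordered basis `s_{i,E}(E)`, with `s_{i,E}(e_i) = -e_i` and
`s_{i,E}(e_j) = e_j + m_{ij} e_i` for `j ≠ i`. -/
def reflectB (ψ : (Fin r → ℤ) → (Fin r → ℤ) → ℂ) (E : Fin r → Fin r → ℤ) (i : Fin r) :
    Fin r → Fin r → ℤ :=
  fun j => if j = i then -(E i) else E j + (mij ψ E i j) • E i

/-- The matrix `M^{ψ,E,ζ}`: off the diagonal, the least `m ≥ 0` with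
`ζ^m = ψ(e_i,e_j)ψ(e_j,e_i)`; on the diagonal, the least `m ≥ 0` with `ζ^m = -ψ(e_i,e_i)`. -/
def Mmat (ψ : (Fin r → ℤ) → (Fin r → ℤ) → ℂ) (E : Fin r → Fin r → ℤ) (ζ : ℂ) :
    Fin r → Fin r → ℕ :=
  fun i j =>
    if i = j then sInf {m : ℕ | ζ ^ m = -(ψ (E i) (E i))}
    else sInf {m : ℕ | ζ ^ m = ψ (E i) (E j) * ψ (E j) (E i)}

/-- if `ψ(e_i,a)ψ(a,e_i)` is always a power of `ψ(e_i,e_i)`, then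
`M^{ψ, s_{i,E}(E), ζ} = M^{ψ, E, ζ}`. -/
theorem statement_10
    (ψ : (Fin r → ℤ) → (Fin r → ℤ) → ℂ)
    (hψ1 : ∀ a b c, ψ (a + b) c = ψ a c * ψ b c)
    (hψ2 : ∀ a b c, ψ a (b + c) = ψ a b * ψ a c)
    (hψroot : ∀ a b, ∃ k : ℕ, 0 < k ∧ ψ a b ^ k = 1)
    (E : Module.Basis (Fin r) ℤ (Fin r → ℤ))
    (ζ : ℂ) (n : ℕ) (hζ : orderOf ζ = n) (hneven : Even n) (hnpos : 0 < n)
    (hζall : ∀ a b, ∃ m : ℕ, ψ a b = ζ ^ m)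
    (i : Fin r) (hadm : ψ (E i) (E i) ≠ 1)
    (hpow : ∀ a : Fin r → ℤ, ∃ m : ℕ, ψ (E i) a * ψ a (E i) = ψ (E i) (E i) ^ m) :
    Mmat ψ (reflectB ψ (fun t => E t) i) ζ = Mmat ψ (fun t => E t) ζ := by
  classical
  have hψ0 : ∀ a b, ψ a b ≠ 0 := by
    intro a b h
    obtain ⟨k, hk, hk1⟩ := hψroot a b
    rw [h, zero_pow hk.ne'] at hk1
    exact zero_ne_one hk1
  have hzl : ∀ b, ψ 0 b = 1 := by
    intro b
    have h : ψ 0 b = ψ 0 b * ψ 0 b := by simpa using hψ1 0 0 b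
    exact (mul_left_cancel₀ (hψ0 0 b) (by rw [mul_one]; exact h)).symm
  have hzr : ∀ a, ψ a 0 = 1 := by
    intro a
    have h : ψ a 0 = ψ a 0 * ψ a 0 := by simpa using hψ2 a 0 0
    exact (mul_left_cancel₀ (hψ0 a 0) (by rw [mul_one]; exact h)).symm
  have hnegl : ∀ a b, ψ (-a) b * ψ a b = 1 := by
    intro a b
    have h := hψ1 (-a) a b
    rw [neg_add_cancel, hzl] at h
    exact h.symm
  have hnegr : ∀ a b, ψ a (-b) * ψ a b = 1 := by
    intro a b
    have h := hψ2 a (-b) b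
    rw [neg_add_cancel, hzr] at h
    exact h.symm
  have hsmull : ∀ (k : ℕ) (a b : Fin r → ℤ), ψ (k • a) b = ψ a b ^ k := by
    intro k a b
    induction k with
    | zero => simpa using hzl b
    | succ k ih => rw [succ_nsmul, hψ1, ih, pow_succ]
  have hsmulr : ∀ (k : ℕ) (a b : Fin r → ℤ), ψ a (k • b) = ψ a b ^ k := by
    intro k a b
    induction k with
    | zero => simpa using hzr a
    | succ k ih => rw [succ_nsmul, hψ2, ih, pow_succ]
  have key : ∀ j, ψ (E i) (E i) ^ (mij ψ (fun t => E t) i j) *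
      (ψ (E i) (E j) * ψ (E j) (E i)) = 1 := by
    intro j
    obtain ⟨s, hs⟩ := hpow (E j)
    obtain ⟨k, hk, hk1⟩ := hψroot (E i) (E i)
    have hfo : IsOfFinOrder (ψ (E i) (E i)) :=
      isOfFinOrder_iff_pow_eq_one.mpr ⟨k, hk, hk1⟩
    have hN0 : 0 < orderOf (ψ (E i) (E i)) := hfo.orderOf_pos
    set N := orderOf (ψ (E i) (E i)) with hNdef
    have hqN : ψ (E i) (E i) ^ N = 1 := pow_orderOf_eq_one _
    have hwit : ψ (E i) (E i) ^ (N * (s + 1) - s) * (ψ (E i) (E j) * ψ (E j) (E i)) = 1 := by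
      rw [hs, ← pow_add]
      have hle : s + 1 ≤ N * (s + 1) := Nat.le_mul_of_pos_left _ hN0
      have h1 : (N * (s + 1) - s) + s = N * (s + 1) := by omega
      rw [h1, pow_mul, hqN, one_pow]
    set T := {m : ℕ | ψ (E i) (E i) ^ m * (ψ (E i) (E j) * ψ (E j) (E i)) = 1} with hT
    have hTne : (N * (s + 1) - s) ∈ T := hwit
    have htT : sInf T ∈ T := Nat.sInf_mem ⟨_, hTne⟩
    have htlt : sInf T < N := by
      by_contra hcon
      push_neg at hcon
      have hsub : (sInf T - N) ∈ T := by
        have h4 : ψ (E i) (E i) ^ (sInf T) * (ψ (E i) (E j) * ψ (E j) (E i)) = 1 := htT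
        have h3 : ψ (E i) (E i) ^ (sInf T) =
            ψ (E i) (E i) ^ (sInf T - N) * ψ (E i) (E i) ^ N := by
          rw [← pow_add]
          congr 1
          omega
        rw [h3, hqN, mul_one] at h4
        exact h4
      have := Nat.sInf_le hsub
      omega
    have hmem : (mij ψ (fun t => E t) i j) ∈ {m : ℕ |
        ψ (E i) (E i) ^ (m + 1) = 1 ∨
        ψ (E i) (E i) ^ m * (ψ (E i) (E j) * ψ (E j) (E i)) = 1} :=
      Nat.sInf_mem ⟨N * (s + 1) - s, Or.inr hwit⟩
    have hle2 : mij ψ (fun t => E t) i j ≤ sInf T :=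
      Nat.sInf_le (Or.inr htT)
    rcases hmem with h1 | h2
    · have hdvd : N ∣ (mij ψ (fun t => E t) i j + 1) := orderOf_dvd_of_pow_eq_one h1
      have hge : N ≤ mij ψ (fun t => E t) i j + 1 := Nat.le_of_dvd (Nat.succ_pos _) hdvd
      have heq : mij ψ (fun t => E t) i j = sInf T := by omega
      rw [heq]
      exact htT
    · exact h2
  have hR : ∀ j, j ≠ i → reflectB ψ (fun t => E t) i j
      = E j + (mij ψ (fun t => E t) i j) • (E i : Fin r → ℤ) := by
    intro j hj
    simp [reflectB, hj]
  have hRi : reflectB ψ (fun t => E t) i i = -(E i : Fin r → ℤ) := by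
    simp [reflectB]
  have hdiag : ∀ a, ψ (reflectB ψ (fun t => E t) i a) (reflectB ψ (fun t => E t) i a)
      = ψ (E a) (E a) := by
    intro a
    by_cases ha : a = i
    · subst ha
      rw [hRi]
      have h1 := hnegl (E a) (-(E a : Fin r → ℤ))
      have h2 := hnegr (E a) (E a)
      linear_combination ψ (E a) (E a) * h1 - ψ (-(E a : Fin r → ℤ)) (-(E a : Fin r → ℤ)) * h2
    · rw [hR a ha]
      simp only [hψ1, hψ2, hsmull, hsmulr]
      have hk1 : (ψ (E i) (E i) ^ (mij ψ (fun t => E t) i a) *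
          (ψ (E i) (E a) * ψ (E a) (E i))) ^ (mij ψ (fun t => E t) i a) = 1 := by
        rw [key a, one_pow]
      linear_combination ψ (E a) (E a) * hk1
  have hoffi : ∀ j, j ≠ i →
      ψ (reflectB ψ (fun t => E t) i i) (reflectB ψ (fun t => E t) i j) *
      ψ (reflectB ψ (fun t => E t) i j) (reflectB ψ (fun t => E t) i i)
      = ψ (E i) (E j) * ψ (E j) (E i) := by
    intro j hj
    rw [hRi, hR j hj]
    simp only [hψ1, hψ2, hsmull, hsmulr]
    have e1 : ψ (-(E i : Fin r → ℤ)) (E j) = (ψ (E i) (E j))⁻¹ :=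
      eq_inv_of_mul_eq_one_left (hnegl _ _)
    have e2 : ψ (-(E i : Fin r → ℤ)) (E i) = (ψ (E i) (E i))⁻¹ :=
      eq_inv_of_mul_eq_one_left (hnegl _ _)
    have e3 : ψ (E j) (-(E i : Fin r → ℤ)) = (ψ (E j) (E i))⁻¹ :=
      eq_inv_of_mul_eq_one_left (hnegr _ _)
    have e4 : ψ (E i) (-(E i : Fin r → ℤ)) = (ψ (E i) (E i))⁻¹ :=
      eq_inv_of_mul_eq_one_left (hnegr _ _)
    have hqm : ψ (E i) (E i) ^ (mij ψ (fun t => E t) i j)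
        = (ψ (E i) (E j) * ψ (E j) (E i))⁻¹ :=
      eq_inv_of_mul_eq_one_left (key j)
    rw [e1, e2, e3, e4]
    simp only [inv_pow]
    rw [hqm, inv_inv]
    have hA := hψ0 (E i) (E j)
    have hB := hψ0 (E j) (E i)
    field_simp
  have hoffjk : ∀ j k, j ≠ i → k ≠ i →
      ψ (reflectB ψ (fun t => E t) i j) (reflectB ψ (fun t => E t) i k) *
      ψ (reflectB ψ (fun t => E t) i k) (reflectB ψ (fun t => E t) i j)
      = ψ (E j) (E k) * ψ (E k) (E j) := by
    intro j k hj hk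
    rw [hR j hj, hR k hk]
    simp only [hψ1, hψ2, hsmull, hsmulr]
    have hk1 : (ψ (E i) (E i) ^ (mij ψ (fun t => E t) i j) *
        (ψ (E i) (E j) * ψ (E j) (E i))) ^ (mij ψ (fun t => E t) i k) = 1 := by
      rw [key j, one_pow]
    have hk2 : (ψ (E i) (E i) ^ (mij ψ (fun t => E t) i k) *
        (ψ (E i) (E k) * ψ (E k) (E i))) ^ (mij ψ (fun t => E t) i j) = 1 := by
      rw [key k, one_pow]
    linear_combination (ψ (E j) (E k) * ψ (E k) (E j) *
        (ψ (E i) (E i) ^ (mij ψ (fun t => E t) i k) *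
        (ψ (E i) (E k) * ψ (E k) (E i))) ^ (mij ψ (fun t => E t) i j)) * hk1 +
      (ψ (E j) (E k) * ψ (E k) (E j)) * hk2
  have hoff : ∀ a b, ψ (reflectB ψ (fun t => E t) i a) (reflectB ψ (fun t => E t) i b) *
      ψ (reflectB ψ (fun t => E t) i b) (reflectB ψ (fun t => E t) i a)
      = ψ (E a) (E b) * ψ (E b) (E a) := by
    intro a b
    by_cases ha : a = i
    · rw [ha]
      by_cases hb : b = i
      · rw [hb, hdiag i]
      · exact hoffi b hb
    · by_cases hb : b = i
      · rw [hb, mul_comm, mul_comm (ψ (E a : Fin r → ℤ) (E i))]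
        exact hoffi a ha
      · exact hoffjk a b ha hb
  funext a b
  simp only [Mmat]
  by_cases hab : a = b
  · simp only [if_pos hab, hdiag]
  · simp only [if_neg hab, hoff]

end MDS
end
end

section
/- Let ψ, E, ζ be as in the context with ζ of even order n, fix i, and assume ψ(e_i, e_i) = −1. Then M^{ψ, s_{i,E}(E), ζ} ≡ τ_i(M^{ψ,E,ζ}) (mod n), entrywise. -/
/-!
Put `q(a, b) = ψ(a, b) ψ(b, a)`. As `ζ` has order `n`, a congruence mod `n` between entries is an
equality between the corresponding powers of `ζ`, and `ζ^{M_{ab}}` is `q(e_a, e_b)` off the diagonal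
and `-ψ(e_a, e_a)` on it. Since `ψ(e_i, e_i) = -1`, `q(e_i, e_i) = 1`, so `m_{ij} ∈ {0, 1}` is exactly
the indicator `e_{ij}` of `q(e_i, e_j) ≠ 1`, and `q(e_i, e_j)^{m_{ij}} = q(e_i, e_j)`. Expanding `ψ`
bimultiplicatively at `s_{i,E}(e_h)` and `s_{i,E}(e_j)` then produces every entry of `τ_i`.
-/

noncomputable section

namespace MDS

variable {r : ℕ}

/-- The operation `τ_i` on symmetric integer matrices (with `e_{ij} = 1` iff `M_{ij} ≠ 0`):
`(τ_i M)_{ii} = 0`, `(τ_i M)_{ij} = (τ_i M)_{ji} = -M_{ij}` for `j ≠ i`,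
`(τ_i M)_{jj} = M_{jj} + e_{ij}(M_{ij} + n/2)` for `j ≠ i`, and
`(τ_i M)_{hj} = M_{hj} + e_{ih} e_{ij} (M_{ih} + M_{ij})` for `h ≠ j` with `h, j ≠ i`. -/
def tauMat (n : ℕ) (i : Fin r) (M : Fin r → Fin r → ℤ) : Fin r → Fin r → ℤ :=
  fun h j =>
    if h = i ∧ j = i then 0
    else if h = i then -(M i j)
    else if j = i then -(M h i)
    else if h = j then M j j + (if M i j ≠ 0 then 1 else 0) * (M i j + ((n / 2 : ℕ) : ℤ))
    else M h j + (if M i h ≠ 0 then 1 else 0) * (if M i j ≠ 0 then 1 else 0) * (M i h + M i j)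

structure IsBicharacter {A K : Type*} [Add A] [Mul K] [Zero K] (ψ : A → A → K) : Prop where
  map_add_left : ∀ a b c, ψ (a + b) c = ψ a c * ψ b c
  map_add_right : ∀ a b c, ψ a (b + c) = ψ a b * ψ a c
  ne_zero : ∀ a b, ψ a b ≠ 0

def symmProd {A K : Type*} [Mul K] (ψ : A → A → K) (a b : A) : K := ψ a b * ψ b a

theorem symmProd_comm {A K : Type*} [CommMagma K] (ψ : A → A → K) (a b : A) :
    symmProd ψ a b = symmProd ψ b a :=
  mul_comm _ _

theorem symmProd_self {A K : Type*} [Monoid K] (ψ : A → A → K) (a : A) :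
    symmProd ψ a a = ψ a a ^ 2 :=
  (sq _).symm

section Bicharacter

variable {A K : Type*} [AddGroup A] [CommGroupWithZero K] {ψ : A → A → K}

theorem IsBicharacter.swap (hψ : IsBicharacter ψ) : IsBicharacter fun a b => ψ b a :=
  ⟨fun a b c => hψ.map_add_right c a b, fun a b c => hψ.map_add_left b c a,
    fun a b => hψ.ne_zero b a⟩

theorem IsBicharacter.map_zero_left (hψ : IsBicharacter ψ) (b : A) : ψ 0 b = 1 :=
  (mul_eq_left₀ (hψ.ne_zero 0 b)).1 (by rw [← hψ.map_add_left, add_zero])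

theorem IsBicharacter.map_neg_left (hψ : IsBicharacter ψ) (a b : A) : ψ (-a) b = (ψ a b)⁻¹ :=
  eq_inv_of_mul_eq_one_right (by rw [← hψ.map_add_left, add_neg_cancel, hψ.map_zero_left])

theorem IsBicharacter.map_nsmul_left (hψ : IsBicharacter ψ) (m : ℕ) (a b : A) :
    ψ (m • a) b = ψ a b ^ m := by
  induction m with
  | zero => rw [zero_smul, hψ.map_zero_left, pow_zero]
  | succ m ih => rw [succ_nsmul, hψ.map_add_left, ih, pow_succ]

theorem IsBicharacter.map_neg_right (hψ : IsBicharacter ψ) (a b : A) : ψ a (-b) = (ψ a b)⁻¹ :=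
  hψ.swap.map_neg_left b a

theorem IsBicharacter.map_nsmul_right (hψ : IsBicharacter ψ) (m : ℕ) (a b : A) :
    ψ a (m • b) = ψ a b ^ m :=
  hψ.swap.map_nsmul_left m b a

theorem isBicharacter_symmProd (hψ : IsBicharacter ψ) : IsBicharacter (symmProd ψ) where
  map_add_left a b c := by
    simp only [symmProd, hψ.map_add_left, hψ.map_add_right, mul_mul_mul_comm]
  map_add_right a b c := by
    simp only [symmProd, hψ.map_add_left, hψ.map_add_right, mul_mul_mul_comm]
  ne_zero a b := mul_ne_zero (hψ.ne_zero a b) (hψ.ne_zero b a)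

end Bicharacter

theorem _root_.IsPrimitiveRoot.pow_div_two_eq_neg_one {R : Type*} [CommRing R] [NoZeroDivisors R]
    {ζ : R} {n : ℕ} (hζ : IsPrimitiveRoot ζ n) (hn : Even n) (hn0 : n ≠ 0) :
    ζ ^ (n / 2) = -1 := by
  obtain ⟨k, rfl⟩ := hn
  have hk : (k + k) / 2 = k := by omega
  rw [hk]
  have hsq : ζ ^ k * ζ ^ k = 1 := by rw [← pow_add, hζ.pow_eq_one]
  exact (mul_self_eq_one_iff.1 hsq).resolve_left (hζ.pow_ne_one_of_pos_of_lt (by omega) (by omega))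

theorem _root_.IsPrimitiveRoot.intModEq_of_zpow_eq {K : Type*} [CommGroupWithZero K] {ζ : K}
    {n : ℕ} (hζ : IsPrimitiveRoot ζ n) (hn : n ≠ 0) {s t : ℤ} (h : ζ ^ s = ζ ^ t) :
    s ≡ t [ZMOD n] := by
  have hζ0 := hζ.ne_zero hn
  have hone : ζ ^ (t - s) = 1 := by rw [zpow_sub₀ hζ0, h, div_self (zpow_ne_zero t hζ0)]
  exact Int.modEq_iff_dvd.2 ((hζ.zpow_eq_one_iff_dvd _).1 hone)

section Reflection

variable {ψ : (Fin r → ℤ) → (Fin r → ℤ) → ℂ} {E : Fin r → Fin r → ℤ} {ζ : ℂ} {i : Fin r}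

theorem pow_Mmat_of_ne (hψζ : ∀ a b, ∃ m : ℕ, ψ a b = ζ ^ m) (G : Fin r → Fin r → ℤ)
    {a b : Fin r} (hab : a ≠ b) : ζ ^ Mmat ψ G ζ a b = symmProd ψ (G a) (G b) := by
  obtain ⟨m₁, h₁⟩ := hψζ (G a) (G b)
  obtain ⟨m₂, h₂⟩ := hψζ (G b) (G a)
  simp only [Mmat, if_neg hab]
  exact Nat.sInf_mem (s := {m : ℕ | ζ ^ m = ψ (G a) (G b) * ψ (G b) (G a)})
    ⟨m₁ + m₂, by rw [Set.mem_ofPred_eq, pow_add, h₁, h₂]⟩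

theorem pow_Mmat_self (hψζ : ∀ a b, ∃ m : ℕ, ψ a b = ζ ^ m) {k : ℕ} (hk : ζ ^ k = -1)
    (G : Fin r → Fin r → ℤ) (a : Fin r) : ζ ^ Mmat ψ G ζ a a = -ψ (G a) (G a) := by
  obtain ⟨m, hm⟩ := hψζ (G a) (G a)
  simp only [Mmat]
  exact Nat.sInf_mem (s := {m : ℕ | ζ ^ m = -ψ (G a) (G a)})
    ⟨k + m, by rw [Set.mem_ofPred_eq, pow_add, hk, hm, neg_one_mul]⟩

theorem Mmat_eq_zero_iff (hψζ : ∀ a b, ∃ m : ℕ, ψ a b = ζ ^ m) (G : Fin r → Fin r → ℤ)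
    {a b : Fin r} (hab : a ≠ b) : Mmat ψ G ζ a b = 0 ↔ symmProd ψ (G a) (G b) = 1 := by
  refine ⟨fun h => by rw [← pow_Mmat_of_ne hψζ G hab, h, pow_zero], fun h => ?_⟩
  simp only [Mmat, if_neg hab]
  exact Nat.sInf_eq_zero.2 (Or.inl (by rw [Set.mem_ofPred_eq, pow_zero]; exact h.symm))

theorem mij_eq (hdiag : ψ (E i) (E i) = -1) (j : Fin r) :
    mij ψ E i j = if symmProd ψ (E i) (E j) = 1 then 0 else 1 := by
  set S := {m : ℕ | ψ (E i) (E i) ^ (m + 1) = 1 ∨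
    ψ (E i) (E i) ^ m * (ψ (E i) (E j) * ψ (E j) (E i)) = 1}
  change sInf S = _
  split_ifs with hq
  · exact Nat.sInf_eq_zero.2 (Or.inl (Or.inr (by rw [pow_zero, one_mul]; exact hq)))
  · have h1 : 1 ∈ S := Or.inl (by rw [hdiag]; norm_num)
    have h0 : 0 ∉ S := by
      rintro (h | h)
      · rw [hdiag] at h; norm_num at h
      · rw [pow_zero, one_mul] at h; exact hq h
    exact le_antisymm (Nat.sInf_le h1)
      (Nat.one_le_iff_ne_zero.2 fun hS => h0 (hS ▸ Nat.sInf_mem ⟨1, h1⟩))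

theorem symmProd_pow_mij (hdiag : ψ (E i) (E i) = -1) (j : Fin r) :
    symmProd ψ (E i) (E j) ^ mij ψ E i j = symmProd ψ (E i) (E j) := by
  rw [mij_eq hdiag]
  split_ifs with hq
  · rw [hq, pow_zero]
  · exact pow_one _

theorem mij_mul_self (hdiag : ψ (E i) (E i) = -1) (j : Fin r) :
    mij ψ E i j * mij ψ E i j = mij ψ E i j := by
  rw [mij_eq hdiag]
  split_ifs <;> rfl

theorem indicator_Mmat_eq_mij (hψζ : ∀ a b, ∃ m : ℕ, ψ a b = ζ ^ m)
    (hdiag : ψ (E i) (E i) = -1) {j : Fin r} (hj : j ≠ i) :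
    (if (Mmat ψ E ζ i j : ℤ) ≠ 0 then 1 else 0 : ℤ) = mij ψ E i j := by
  simp only [ne_eq, Nat.cast_eq_zero, Mmat_eq_zero_iff hψζ E hj.symm, mij_eq hdiag]
  split_ifs <;> rfl

theorem reflectB_self : reflectB ψ E i i = -E i := by
  simp [reflectB]

theorem reflectB_of_ne {j : Fin r} (hj : j ≠ i) :
    reflectB ψ E i j = E j + mij ψ E i j • E i := by
  simp [reflectB, hj]

theorem Mmat_reflectB_self (hψ : IsBicharacter ψ) (hdiag : ψ (E i) (E i) = -1) :
    Mmat ψ (reflectB ψ E i) ζ i i = 0 := by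
  simp only [Mmat]
  refine Nat.sInf_eq_zero.2 (Or.inl ?_)
  rw [Set.mem_ofPred_eq, reflectB_self, hψ.map_neg_left, hψ.map_neg_right, inv_inv, hdiag,
    pow_zero, neg_neg]

theorem symmProd_reflectB_self_left (hψ : IsBicharacter ψ) (hdiag : ψ (E i) (E i) = -1)
    {j : Fin r} (hj : j ≠ i) :
    symmProd ψ (reflectB ψ E i i) (reflectB ψ E i j) = (symmProd ψ (E i) (E j))⁻¹ := by
  have hq := isBicharacter_symmProd hψ
  rw [reflectB_self, reflectB_of_ne hj, hq.map_neg_left, hq.map_add_right, hq.map_nsmul_right,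
    symmProd_self, hdiag]
  norm_num

theorem symmProd_reflectB_of_ne (hψ : IsBicharacter ψ) (hdiag : ψ (E i) (E i) = -1)
    {h j : Fin r} (hh : h ≠ i) (hj : j ≠ i) :
    symmProd ψ (reflectB ψ E i h) (reflectB ψ E i j) = symmProd ψ (E h) (E j) *
      (symmProd ψ (E i) (E h) * symmProd ψ (E i) (E j)) ^ (mij ψ E i h * mij ψ E i j) := by
  have hq := isBicharacter_symmProd hψ
  have hih : symmProd ψ (E i) (E h) ^ mij ψ E i j =
      symmProd ψ (E i) (E h) ^ (mij ψ E i h * mij ψ E i j) := by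
    rw [pow_mul, symmProd_pow_mij hdiag]
  have hij : symmProd ψ (E i) (E j) ^ mij ψ E i h =
      symmProd ψ (E i) (E j) ^ (mij ψ E i h * mij ψ E i j) := by
    rw [mul_comm, pow_mul, symmProd_pow_mij hdiag]
  rw [reflectB_of_ne hh, reflectB_of_ne hj, hq.map_add_left, hq.map_add_right, hq.map_add_right,
    hq.map_nsmul_left, hq.map_nsmul_left, hq.map_nsmul_right, hq.map_nsmul_right,
    symmProd_self ψ (E i), hdiag, symmProd_comm ψ (E h) (E i), hih, hij, mul_pow]
  ring

theorem neg_reflectB_diag (hψ : IsBicharacter ψ) (hdiag : ψ (E i) (E i) = -1)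
    {j : Fin r} (hj : j ≠ i) :
    -ψ (reflectB ψ E i j) (reflectB ψ E i j) =
      -ψ (E j) (E j) * (-symmProd ψ (E i) (E j)) ^ mij ψ E i j := by
  have hii : ψ (E i) (E i) ^ (mij ψ E i j * mij ψ E i j) = (-1) ^ mij ψ E i j := by
    rw [mij_mul_self hdiag, hdiag]
  rw [reflectB_of_ne hj, hψ.map_add_left, hψ.map_add_right, hψ.map_add_right,
    hψ.map_nsmul_left, hψ.map_nsmul_left, hψ.map_nsmul_right, hψ.map_nsmul_right, ← pow_mul,
    hii, symmProd, neg_pow]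
  ring

theorem zpow_Mmat_reflectB {n : ℕ} (hζ : IsPrimitiveRoot ζ n) (hn : Even n) (hn0 : n ≠ 0)
    (hψ : IsBicharacter ψ) (hψζ : ∀ a b, ∃ m : ℕ, ψ a b = ζ ^ m) (hdiag : ψ (E i) (E i) = -1)
    (h j : Fin r) :
    ζ ^ (Mmat ψ (reflectB ψ E i) ζ h j : ℤ) =
      ζ ^ tauMat n i (fun a b => (Mmat ψ E ζ a b : ℤ)) h j := by
  have hζ0 : ζ ≠ 0 := hζ.ne_zero hn0
  have hhalf : ζ ^ (n / 2) = -1 := hζ.pow_div_two_eq_neg_one hn hn0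
  rcases eq_or_ne h i with rfl | hh
  · rcases eq_or_ne j h with rfl | hj
    · simp only [tauMat, and_self, ↓reduceIte]
      rw [Mmat_reflectB_self hψ hdiag, Nat.cast_zero]
    · simp only [tauMat, hj, and_false, ↓reduceIte]
      rw [zpow_natCast, pow_Mmat_of_ne hψζ _ hj.symm, symmProd_reflectB_self_left hψ hdiag hj,
        zpow_neg, zpow_natCast, pow_Mmat_of_ne hψζ _ hj.symm]
  rcases eq_or_ne j i with rfl | hj
  · simp only [tauMat, hh, false_and, ↓reduceIte]
    rw [zpow_natCast, pow_Mmat_of_ne hψζ _ hh, symmProd_comm,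
      symmProd_reflectB_self_left hψ hdiag hh, zpow_neg, zpow_natCast, pow_Mmat_of_ne hψζ _ hh,
      symmProd_comm]
  rcases eq_or_ne h j with rfl | hhj
  · simp only [tauMat, hh, false_and, ↓reduceIte]
    rw [indicator_Mmat_eq_mij hψζ hdiag hh, zpow_add₀ hζ0, mul_comm (mij ψ E i h : ℤ), zpow_mul,
      zpow_add₀ hζ0]
    simp only [zpow_natCast]
    rw [pow_Mmat_self hψζ hhalf, pow_Mmat_self hψζ hhalf, pow_Mmat_of_ne hψζ _ hh.symm, hhalf,
      neg_reflectB_diag hψ hdiag hh, mul_neg_one]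
  · simp only [tauMat, hh, hj, hhj, false_and, ↓reduceIte]
    rw [indicator_Mmat_eq_mij hψζ hdiag hh, indicator_Mmat_eq_mij hψζ hdiag hj, zpow_add₀ hζ0,
      ← Nat.cast_mul, mul_comm ((mij ψ E i h * mij ψ E i j : ℕ) : ℤ), zpow_mul, zpow_add₀ hζ0]
    simp only [zpow_natCast]
    rw [pow_Mmat_of_ne hψζ _ hhj, pow_Mmat_of_ne hψζ _ hhj, pow_Mmat_of_ne hψζ _ hh.symm,
      pow_Mmat_of_ne hψζ _ hj.symm, symmProd_reflectB_of_ne hψ hdiag hh hj]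

end Reflection

theorem statement_12_general
    (ψ : (Fin r → ℤ) → (Fin r → ℤ) → ℂ)
    (hψ1 : ∀ a b c, ψ (a + b) c = ψ a c * ψ b c)
    (hψ2 : ∀ a b c, ψ a (b + c) = ψ a b * ψ a c)
    (E : Module.Basis (Fin r) ℤ (Fin r → ℤ))
    (ζ : ℂ) (n : ℕ) (hζ : orderOf ζ = n) (hneven : Even n) (hnpos : 0 < n)
    (hζall : ∀ a b, ∃ m : ℕ, ψ a b = ζ ^ m)
    (i : Fin r) (hdiag : ψ (E i) (E i) = -1) :
    ∀ h j : Fin r,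
      (Mmat ψ (reflectB ψ (fun t => E t) i) ζ h j : ℤ)
        ≡ tauMat n i (fun a b => (Mmat ψ (fun t => E t) ζ a b : ℤ)) h j [ZMOD (n : ℤ)] := by
  intro h j
  have hprim : IsPrimitiveRoot ζ n := IsPrimitiveRoot.iff_orderOf.2 hζ
  have hψ : IsBicharacter ψ := ⟨hψ1, hψ2, fun a b => by
    obtain ⟨m, hm⟩ := hζall a b
    exact hm ▸ pow_ne_zero m (hprim.ne_zero hnpos.ne')⟩
  exact hprim.intModEq_of_zpow_eq hnpos.ne' <|
    zpow_Mmat_reflectB hprim hneven hnpos.ne' hψ hζall hdiag h j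

/-- if `ψ(e_i,e_i) = -1`, then `M^{ψ, s_{i,E}(E), ζ} ≡ τ_i(M^{ψ,E,ζ}) (mod n)`,
entrywise. -/
theorem statement_12
    (ψ : (Fin r → ℤ) → (Fin r → ℤ) → ℂ)
    (hψ1 : ∀ a b c, ψ (a + b) c = ψ a c * ψ b c)
    (hψ2 : ∀ a b c, ψ a (b + c) = ψ a b * ψ a c)
    (hψroot : ∀ a b, ∃ k : ℕ, 0 < k ∧ ψ a b ^ k = 1)
    (E : Module.Basis (Fin r) ℤ (Fin r → ℤ))
    (ζ : ℂ) (n : ℕ) (hζ : orderOf ζ = n) (hneven : Even n) (hnpos : 0 < n)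
    (hζall : ∀ a b, ∃ m : ℕ, ψ a b = ζ ^ m)
    (i : Fin r) (hdiag : ψ (E i) (E i) = -1) :
    ∀ h j : Fin r,
      (Mmat ψ (reflectB ψ (fun t => E t) i) ζ h j : ℤ)
        ≡ tauMat n i (fun a b => (Mmat ψ (fun t => E t) ζ a b : ℤ)) h j [ZMOD (n : ℤ)] :=
  statement_12_general ψ hψ1 hψ2 E ζ n hζ hneven hnpos hζall i hdiag

end MDS
end
end
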